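/- arXiv:1412.7653 — 2 statements merged into one kernel-verified Lean document; each statement's English description precedes it below -/
import Mathlib

section
/- For natural numbers D, N, j, t with j + t ≤ D ≤ N and N > 0, the real number C(D,j)·C(D−j,t)/C(N,j+t) is at most (D/N)^(j+t) · C(j+t, j). -/
/-!
Choosing `j` and then `t` more elements is choosing `j + t` and then which `j` came first:
`C(D, j) C(D - j, t) = C(D, j + t) C(j + t, j)`. Moreover
`C(D, k) / C(N, k) = ∏_{i < k} (D - i) / (N - i)` with every factor at most `D / N`.
-/

namespace Nat

theorem sub_mul_le_sub_mul_of_le {m n : ℕ} (k : ℕ) (h : m ≤ n) : (m - k) * n ≤ (n - k) * m := by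
  rw [Nat.sub_mul, Nat.sub_mul, Nat.mul_comm n m]
  exact Nat.sub_le_sub_left (Nat.mul_le_mul_left k h) _

theorem choose_mul_pow_le_choose_mul_pow {m n : ℕ} (k : ℕ) (h : m ≤ n) :
    m.choose k * n ^ k ≤ n.choose k * m ^ k := by
  induction k with
  | zero => simp
  | succ k ih =>
    refine Nat.le_of_mul_le_mul_right ?_ k.succ_pos
    calc m.choose (k + 1) * n ^ (k + 1) * (k + 1)
        = (m.choose k * n ^ k) * ((m - k) * n) := by
          rw [mul_right_comm, choose_succ_right_eq]; ring
      _ ≤ (n.choose k * m ^ k) * ((n - k) * m) :=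
          Nat.mul_le_mul ih (sub_mul_le_sub_mul_of_le k h)
      _ = n.choose (k + 1) * m ^ (k + 1) * (k + 1) := by
          rw [mul_right_comm _ _ (k + 1), choose_succ_right_eq]; ring

theorem cast_choose_div_cast_choose_le {m n : ℕ} (k : ℕ) (h : m ≤ n) :
    (m.choose k : ℝ) / n.choose k ≤ ((m : ℝ) / n) ^ k := by
  rcases lt_or_ge n k with hnk | hkn
  · rw [choose_eq_zero_of_lt hnk, cast_zero, div_zero]
    positivity
  have hpow : 0 < n ^ k := Nat.pow_pos_iff.2 (by omega)
  rw [div_pow, div_le_div_iff₀ (by exact_mod_cast choose_pos hkn) (by exact_mod_cast hpow),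
    mul_comm (m ^ k : ℝ)]
  exact_mod_cast choose_mul_pow_le_choose_mul_pow k h

end Nat

theorem choose_prod_ratio_le_general (D N j t : ℕ) (h2 : D ≤ N) :
    (D.choose j : ℝ) * ((D - j).choose t : ℝ) / (N.choose (j + t) : ℝ)
      ≤ ((D : ℝ) / N) ^ (j + t) * ((j + t).choose j : ℝ) := by
  have hsplit : D.choose j * (D - j).choose t = D.choose (j + t) * (j + t).choose j := by
    rw [Nat.choose_mul (Nat.le_add_right j t), Nat.add_sub_cancel_left]
  rw [← Nat.cast_mul, hsplit, Nat.cast_mul, mul_div_right_comm]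
  gcongr
  exact Nat.cast_choose_div_cast_choose_le (j + t) h2

theorem choose_prod_ratio_le (D N j t : ℕ) (h1 : j + t ≤ D) (h2 : D ≤ N) (hN : 0 < N) :
    (D.choose j : ℝ) * ((D - j).choose t : ℝ) / (N.choose (j + t) : ℝ)
      ≤ ((D : ℝ) / N) ^ (j + t) * ((j + t).choose j : ℝ) :=
  choose_prod_ratio_le_general D N j t h2
end

section
/- For a real number a with 0 < a < 1/2 and a natural number i, it holds that ∑_{r=1}^{2i+1} a^r · (∑_{s : s < r−s ∧ s ≤ r} C(r,s)) ≤ (a/(1−2a)) · (1 − (2a)^(2i+1)). -/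
/-! Pairing `s` with `r - s` shows that the binomial coefficients strictly below the middle of
row `r` sum to at most `2 ^ r / 2`, so the `r`-th term is at most `(2 a) ^ r / 2`; summing this
geometric series gives the bound. -/

open Finset

theorem Nat.sum_choose_filter_lt_sub_eq (r : ℕ) :
    ∑ s ∈ (range (r + 1)).filter (fun s => s < r - s), r.choose s
      = ∑ s ∈ (range (r + 1)).filter (fun s => r - s < s), r.choose s := by
  refine sum_nbij' (r - ·) (r - ·) ?_ ?_ ?_ ?_ ?_ <;>
    intro s hs <;> simp only [mem_filter, mem_range] at hs ⊢
  all_goals first | omega | exact (Nat.choose_symm (by omega)).symm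

theorem Nat.two_mul_sum_choose_filter_lt_sub_le (r : ℕ) :
    2 * ∑ s ∈ (range (r + 1)).filter (fun s => s < r - s), r.choose s ≤ 2 ^ r := by
  set lower := ∑ s ∈ (range (r + 1)).filter (fun s => s < r - s), r.choose s
  calc 2 * lower
      = lower + ∑ s ∈ (range (r + 1)).filter (fun s => r - s < s), r.choose s := by
        rw [two_mul, ← Nat.sum_choose_filter_lt_sub_eq]
    _ ≤ lower + ∑ s ∈ (range (r + 1)).filter (fun s => ¬ s < r - s), r.choose s := by
        gcongr with s
        omega
    _ = 2 ^ r := by rw [sum_filter_add_sum_filter_not, Nat.sum_range_choose]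

theorem pow_mul_sum_choose_filter_lt_sub_le {a : ℝ} (ha : 0 ≤ a) (r : ℕ) :
    a ^ r * ∑ s ∈ (range (r + 1)).filter (fun s => s < r - s), (r.choose s : ℝ)
      ≤ (2 * a) ^ r / 2 := by
  have key : 2 * ∑ s ∈ (range (r + 1)).filter (fun s => s < r - s), (r.choose s : ℝ)
      ≤ 2 ^ r := by exact_mod_cast Nat.two_mul_sum_choose_filter_lt_sub_le r
  calc a ^ r * ∑ s ∈ (range (r + 1)).filter (fun s => s < r - s), (r.choose s : ℝ)
      = a ^ r * (2 * ∑ s ∈ (range (r + 1)).filter (fun s => s < r - s), (r.choose s : ℝ)) / 2 := by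
        ring
    _ ≤ a ^ r * 2 ^ r / 2 := by gcongr
    _ = (2 * a) ^ r / 2 := by ring

theorem geom_sum_Icc_one {K : Type*} [Field K] {x : K} (hx : x ≠ 1) (n : ℕ) :
    ∑ r ∈ Icc 1 n, x ^ r = x * (1 - x ^ n) / (1 - x) := by
  rw [← Ico_add_one_right_eq_Icc, geom_sum_Ico' hx (by omega)]
  ring

theorem sum_pow_mul_binom_le (a : ℝ) (ha0 : 0 < a) (ha : a < 1 / 2) (i : ℕ) :
    ∑ r ∈ Finset.Icc 1 (2 * i + 1),
        a ^ r * (∑ s ∈ (Finset.range (r + 1)).filter (fun s => s < r - s), (r.choose s : ℝ))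
      ≤ a / (1 - 2 * a) * (1 - (2 * a) ^ (2 * i + 1)) := by
  have h2a : 2 * a ≠ 1 := by linarith
  calc _ ≤ ∑ r ∈ Icc 1 (2 * i + 1), (2 * a) ^ r / 2 :=
        sum_le_sum fun r _ => pow_mul_sum_choose_filter_lt_sub_le ha0.le r
    _ = a / (1 - 2 * a) * (1 - (2 * a) ^ (2 * i + 1)) := by
        rw [← sum_div, geom_sum_Icc_one h2a]
        field_simp
end
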